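/- With the notation of the context, the following reduced Waring-type polynomial identity holds in R[X_0, …, X_n]: D_a · X_0^{a_0} X_1^{a_1} ⋯ X_n^{a_n} = ∑_{Z_a ⊆ A ⊆ E_a, A ≠ {0,…,n}} ∑_{k ∈ K̄_A} ∑_{s ∈ S̄_A} C̄_{A,k,s} · (ℓ_{A,k,s})^d, where C̄_{A,k,s} = ∑_{j=0}^{min_{i∉A}(m_i − k_i)} t^{d·j} · C_{A, k + j·1, s} and k + j·1 denotes the tuple (k_i + j)_{i∉A}. -/
import Mathlib


open Finset

noncomputable section WaringStmt2

variable {R : Type*} [CommRing R]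

/-- The polynomial `F_i(y) = ∏_{j=1}^{m_i} (y − t^{a_i − 2j})` where `m_i = ⌊(a_i−1)/2⌋`;
for `a_i ∈ {0,1,2}` (i.e. `m_i ≤ 0`) this is the empty product `1`. -/
def Ffun (t : R) (ai : ℕ) : Polynomial R :=
  ∏ j ∈ Finset.Icc 1 ((ai - 1) / 2), (Polynomial.X - Polynomial.C (t ^ (ai - 2 * j)))

/-- `Z_a`, the set of indices with `a_i = 0`. -/
def Zset (n : ℕ) (a : Fin (n + 1) → ℕ) : Finset (Fin (n + 1)) :=
  Finset.univ.filter fun i => a i = 0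

/-- `E_a`, the set of indices with `a_i` even. -/
def Eset (n : ℕ) (a : Fin (n + 1) → ℕ) : Finset (Fin (n + 1)) :=
  Finset.univ.filter fun i => Even (a i)

/-- `K_A`: the tuples `(k_i)_{i∉A}` with `0 ≤ k_i ≤ m_i = ⌊(a_i−1)/2⌋` for all `i ∉ A`,
encoded as functions on all of `Fin (n+1)` whose values on `A` are forced to be `0`. -/
def Kset (n : ℕ) (a : Fin (n + 1) → ℕ) (A : Finset (Fin (n + 1))) :
    Finset (Fin (n + 1) → ℕ) :=
  Fintype.piFinset fun i => if i ∈ A then {0} else Finset.range ((a i - 1) / 2 + 1)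

/-- `K̄_A ⊆ K_A`: those tuples with `min_{i∉A} k_i = 0` (for tuples of nonnegative
integers this means some entry `k_i`, `i ∉ A`, vanishes). -/
def Kbar (n : ℕ) (a : Fin (n + 1) → ℕ) (A : Finset (Fin (n + 1))) :
    Finset (Fin (n + 1) → ℕ) :=
  (Kset n a A).filter fun k => ∃ i ∉ A, k i = 0

/-- `S̄_A`: the sign tuples `(s_i)_{i∉A}` with `s_i ∈ {0,1}` and `s_i = 0` at the least
index `i ∉ A`, encoded as functions on all of `Fin (n+1)` forced to be `0` on `A`. -/
def Sbar (n : ℕ) (A : Finset (Fin (n + 1))) : Finset (Fin (n + 1) → ℕ) :=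
  Fintype.piFinset fun i =>
    if i ∈ A then {0} else if ∀ j, j ∉ A → i ≤ j then {0} else {0, 1}

/-- The linear form `ℓ_{A,k,s} = ∑_{i∉A} (−1)^{s_i} t^{k_i} X_i`. -/
def ellForm (n : ℕ) (t : R) (A : Finset (Fin (n + 1))) (k s : Fin (n + 1) → ℕ) :
    MvPolynomial (Fin (n + 1)) R :=
  ∑ i ∈ Aᶜ, MvPolynomial.C ((-1 : R) ^ s i * t ^ k i) * MvPolynomial.X i

/-- `D_a = (−1)^{|Z_a|} · 2^n · (d choose a_0,…,a_n) · ∏_{i∉Z_a} F_i(t^{a_i})`. -/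
def Dcoef (n : ℕ) (a : Fin (n + 1) → ℕ) (t : R) : R :=
  (-1) ^ (Zset n a).card * 2 ^ n * (Nat.multinomial Finset.univ a : R) *
    ∏ i ∈ (Zset n a)ᶜ, (Ffun t (a i)).eval (t ^ a i)

/-- `C_{A,k,s} = (−1)^{|A|} · 2^{|A|} · (−1)^{∑_{i∉A} a_i s_i} · ∏_{i∈A} F_i(1)
· ∏_{i∉A} c(y^{k_i}, F_i)`. -/
def Ccoef (n : ℕ) (a : Fin (n + 1) → ℕ) (t : R) (A : Finset (Fin (n + 1)))
    (k s : Fin (n + 1) → ℕ) : R :=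
  (-1) ^ A.card * 2 ^ A.card * (-1) ^ (∑ i ∈ Aᶜ, a i * s i) *
    (∏ i ∈ A, (Ffun t (a i)).eval 1) * ∏ i ∈ Aᶜ, (Ffun t (a i)).coeff (k i)

/-- `C̄_{A,k,s} = ∑_{j=0}^{min_{i∉A}(m_i − k_i)} t^{d·j} C_{A, k+j·1, s}`, where
`k + j·1` is the tuple `(k_i + j)_{i∉A}`.  The range `0 ≤ j ≤ min_{i∉A}(m_i − k_i)` is
expressed as those `j` (necessarily at most `d`) with `k_i + j ≤ m_i` for all `i ∉ A`. -/
def Cbar (n : ℕ) (a : Fin (n + 1) → ℕ) (d : ℕ) (t : R) (A : Finset (Fin (n + 1)))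
    (k s : Fin (n + 1) → ℕ) : R :=
  ∑ j ∈ (Finset.range (d + 1)).filter (fun j => ∀ i ∉ A, k i + j ≤ (a i - 1) / 2),
    t ^ (d * j) * Ccoef n a t A (fun i => k i + j) s


lemma Ffun_natDegree_lt (t : R) (ai : ℕ) : (Ffun t ai).natDegree < (ai - 1) / 2 + 1 := by
  have h := Polynomial.natDegree_prod_le (Finset.Icc 1 ((ai - 1) / 2))
    (fun j => (Polynomial.X - Polynomial.C (t ^ (ai - 2 * j))))
  have h2 : ∀ j ∈ Finset.Icc 1 ((ai - 1) / 2),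
      (Polynomial.X - Polynomial.C (t ^ (ai - 2 * j))).natDegree ≤ 1 := fun j _ => by
    exact le_trans (Polynomial.natDegree_sub_le _ _)
      (max_le Polynomial.natDegree_X_le
        (le_trans (le_of_eq (Polynomial.natDegree_C _)) (Nat.zero_le 1)))
  calc (Ffun t ai).natDegree ≤ _ := h
    _ ≤ ∑ _j ∈ Finset.Icc 1 ((ai - 1) / 2), 1 := Finset.sum_le_sum h2
    _ < (ai - 1) / 2 + 1 := by rw [Finset.sum_const, smul_eq_mul, mul_one, Nat.card_Icc]; omega

lemma Ffun_eval (t : R) (ai : ℕ) (y : R) :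
    (Ffun t ai).eval y = ∑ v ∈ Finset.range ((ai - 1) / 2 + 1), (Ffun t ai).coeff v * y ^ v :=
  Polynomial.eval_eq_sum_range' (Ffun_natDegree_lt t ai) y

lemma Ffun_of_zero (t : R) : Ffun t 0 = 1 := by simp [Ffun]

lemma Ffun_eval_root (t : R) {ai b : ℕ} (hb1 : 1 ≤ b) (hb2 : b + 2 ≤ ai)
    (hpar : b % 2 = ai % 2) : (Ffun t ai).eval (t ^ b) = 0 := by
  rw [Ffun, Polynomial.eval_prod]
  refine Finset.prod_eq_zero (i := (ai - b) / 2) ?_ ?_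
  · simp only [Finset.mem_Icc]; omega
  · have : ai - 2 * ((ai - b) / 2) = b := by omega
    simp [this]

lemma mem_Kset {n : ℕ} {a : Fin (n + 1) → ℕ} {A : Finset (Fin (n + 1))}
    {k : Fin (n + 1) → ℕ} :
    k ∈ Kset n a A ↔ (∀ i ∈ A, k i = 0) ∧ ∀ i ∉ A, k i ≤ (a i - 1) / 2 := by
  simp only [Kset, Fintype.mem_piFinset]
  constructor
  · intro h
    refine ⟨fun i hi => ?_, fun i hi => ?_⟩
    · have := h i; rwa [if_pos hi, Finset.mem_singleton] at this
    · have := h i; rw [if_neg hi, Finset.mem_range] at this; omega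
  · rintro ⟨h1, h2⟩ i
    by_cases hi : i ∈ A
    · rw [if_pos hi, Finset.mem_singleton]; exact h1 i hi
    · rw [if_neg hi, Finset.mem_range]; exact Nat.lt_succ_of_le (h2 i hi)

lemma Sbar_zero {n : ℕ} {A : Finset (Fin (n + 1))} {s : Fin (n + 1) → ℕ}
    (hs : s ∈ Sbar n A) {i : Fin (n + 1)} (hi : i ∈ A) : s i = 0 := by
  rw [Sbar, Fintype.mem_piFinset] at hs
  have := hs i; rwa [if_pos hi, Finset.mem_singleton] at this

lemma prod_univ_ite {γ : Type*} [Fintype γ] [DecidableEq γ] {M : Type*} [CommMonoid M]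
    (A : Finset γ) (f : γ → M) :
    (∏ i, if i ∈ A then 1 else f i) = ∏ i ∈ Aᶜ, f i := by
  rw [← Finset.prod_compl_mul_prod A]
  rw [Finset.prod_congr rfl (fun i hi => if_neg (Finset.mem_compl.mp hi)),
    Finset.prod_congr rfl (fun i (hi : i ∈ A) => if_pos hi), Finset.prod_const_one, mul_one]

lemma inner_sum_eval (n : ℕ) (a : Fin (n + 1) → ℕ) (t : R) (A : Finset (Fin (n + 1)))
    (b : Fin (n + 1) → ℕ) :
    ∑ k ∈ Kset n a A, ∑ s ∈ Sbar n A,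
      Ccoef n a t A k s * ∏ i, (if i ∈ A then (0:R) else (-1) ^ s i * t ^ k i) ^ b i
    = (-1) ^ A.card * 2 ^ A.card * (∏ i ∈ A, (Ffun t (a i)).eval 1)
      * (∏ i ∈ A, (0:R) ^ b i)
      * (∏ i ∈ Aᶜ, (Ffun t (a i)).eval (t ^ b i))
      * ∏ i, (if i ∈ A ∨ (∀ j ∉ A, i ≤ j) then (1:R) else 1 + (-1) ^ (a i + b i)) := by
  have key : ∀ k ∈ Kset n a A, ∀ s ∈ Sbar n A,
      Ccoef n a t A k s * ∏ i, (if i ∈ A then (0:R) else (-1) ^ s i * t ^ k i) ^ b i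
      = (-1) ^ A.card * 2 ^ A.card * (∏ i ∈ A, (Ffun t (a i)).eval 1)
        * (∏ i ∈ A, (0:R) ^ b i)
        * ((∏ i, (if i ∈ A then (1:R) else (Ffun t (a i)).coeff (k i) * (t ^ b i) ^ k i))
          * ∏ i, ((-1:R) ^ (a i + b i)) ^ s i) := by
    intro k hk s hs
    have hsplit : (∏ i, (if i ∈ A then (0:R) else (-1) ^ s i * t ^ k i) ^ b i)
        = (∏ i ∈ A, (0:R) ^ b i) *
          ∏ i ∈ Aᶜ, (((-1:R) ^ s i) ^ b i * (t ^ k i) ^ b i) := by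
      rw [← Finset.prod_compl_mul_prod A, mul_comm]
      congr 1
      · exact Finset.prod_congr rfl fun i hi => by rw [if_pos hi]
      · exact Finset.prod_congr rfl fun i hi => by
          rw [if_neg (Finset.mem_compl.mp hi), mul_pow]
    have hK : (∏ i, (if i ∈ A then (1:R) else (Ffun t (a i)).coeff (k i) * (t ^ b i) ^ k i))
        = ∏ i ∈ Aᶜ, ((Ffun t (a i)).coeff (k i) * (t ^ b i) ^ k i) := prod_univ_ite _ _
    have hS : (∏ i, ((-1:R) ^ (a i + b i)) ^ s i)
        = ∏ i ∈ Aᶜ, ((-1:R) ^ (a i + b i)) ^ s i := by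
      rw [← prod_univ_ite A]
      exact Finset.prod_congr rfl fun i _ => by
        by_cases hi : i ∈ A
        · rw [if_pos hi, Sbar_zero hs hi, pow_zero]
        · rw [if_neg hi]
    rw [Finset.prod_mul_distrib] at hsplit
    rw [hsplit, hK, hS, Ccoef]
    have hsgn : ((-1:R)) ^ (∑ i ∈ Aᶜ, a i * s i) * ∏ i ∈ Aᶜ, ((-1:R) ^ s i) ^ b i
        = ∏ i ∈ Aᶜ, ((-1:R) ^ (a i + b i)) ^ s i := by
      rw [← Finset.prod_pow_eq_pow_sum, ← Finset.prod_mul_distrib]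
      exact Finset.prod_congr rfl fun i _ => by
        rw [← pow_mul, ← pow_mul, ← pow_add]
        congr 1
        ring
    rw [← hsgn]
    have hKt : ∏ i ∈ Aᶜ, ((Ffun t (a i)).coeff (k i) * (t ^ b i) ^ k i)
        = (∏ i ∈ Aᶜ, (Ffun t (a i)).coeff (k i)) * ∏ i ∈ Aᶜ, (t ^ k i) ^ b i := by
      rw [← Finset.prod_mul_distrib]
      exact Finset.prod_congr rfl fun i _ => by rw [pow_right_comm]
    rw [hKt]
    ring
  rw [Finset.sum_congr rfl fun k hk => Finset.sum_congr rfl fun s hs => key k hk s hs]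
  simp only [← Finset.mul_sum]
  rw [← Finset.sum_mul]
  have hKsum : (∑ k ∈ Kset n a A,
      ∏ i, (if i ∈ A then (1:R) else (Ffun t (a i)).coeff (k i) * (t ^ b i) ^ k i))
      = ∏ i ∈ Aᶜ, (Ffun t (a i)).eval (t ^ b i) := by
    rw [Kset, ← Finset.prod_univ_sum
      (fun i => if i ∈ A then ({0} : Finset ℕ) else Finset.range ((a i - 1) / 2 + 1))
      (fun i v => if i ∈ A then (1:R) else (Ffun t (a i)).coeff v * (t ^ b i) ^ v)]
    rw [← prod_univ_ite A (fun i => (Ffun t (a i)).eval (t ^ b i))]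
    refine Finset.prod_congr rfl fun i _ => ?_
    by_cases hi : i ∈ A
    · rw [if_pos hi, if_pos hi, Finset.sum_singleton, if_pos hi]
    · rw [if_neg hi, Finset.sum_congr rfl fun v _ => if_neg hi, Ffun_eval, if_neg hi]
  have hSsum : (∑ s ∈ Sbar n A, ∏ i, ((-1:R) ^ (a i + b i)) ^ s i)
      = ∏ i, (if i ∈ A ∨ (∀ j ∉ A, i ≤ j) then (1:R) else 1 + (-1) ^ (a i + b i)) := by
    rw [Sbar, ← Finset.prod_univ_sum
      (fun i => if i ∈ A then ({0} : Finset ℕ)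
        else if ∀ j, j ∉ A → i ≤ j then {0} else {0, 1})
      (fun i v => ((-1:R) ^ (a i + b i)) ^ v)]
    refine Finset.prod_congr rfl fun i _ => ?_
    by_cases hi : i ∈ A
    · rw [if_pos hi, Finset.sum_singleton, pow_zero, if_pos (Or.inl hi)]
    · rw [if_neg hi]
      by_cases hm : ∀ j, j ∉ A → i ≤ j
      · rw [if_pos hm, Finset.sum_singleton, pow_zero, if_pos (Or.inr hm)]
      · rw [if_neg hm, if_neg (by push_neg at hm ⊢; exact ⟨hi, hm⟩)]
        rw [show ({0, 1} : Finset ℕ) = insert 0 {1} from rfl,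
          Finset.sum_insert (by simp), Finset.sum_singleton, pow_zero, pow_one]
  rw [hKsum, hSsum]
  ring

def Sval (n : ℕ) (a : Fin (n + 1) → ℕ) (t : R) (A : Finset (Fin (n + 1)))
    (b : Fin (n + 1) → ℕ) : R :=
  (-1) ^ A.card * 2 ^ A.card * (∏ i ∈ A, (Ffun t (a i)).eval 1)
    * (∏ i ∈ A, (0:R) ^ b i)
    * (∏ i ∈ Aᶜ, (Ffun t (a i)).eval (t ^ b i))
    * ∏ i, (if i ∈ A ∨ (∀ j ∉ A, i ≤ j) then (1:R) else 1 + (-1) ^ (a i + b i))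

lemma inner_sum_eval' (n : ℕ) (a : Fin (n + 1) → ℕ) (t : R) (A : Finset (Fin (n + 1)))
    (b : Fin (n + 1) → ℕ) :
    ∑ k ∈ Kset n a A, ∑ s ∈ Sbar n A,
      Ccoef n a t A k s * ∏ i, (if i ∈ A then (0:R) else (-1) ^ s i * t ^ k i) ^ b i
    = Sval n a t A b := inner_sum_eval n a t A b

lemma alt_sum {γ : Type*} [DecidableEq γ] [Fintype γ] (Z U : Finset γ) :
    ∑ A ∈ Finset.univ.powerset.filter (fun A => Z ⊆ A ∧ A ⊆ U), ((-1:R) ^ A.card)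
    = if Z ⊆ U ∧ U = Z then (-1:R) ^ Z.card else 0 := by
  by_cases hZU : Z ⊆ U
  · have hbij : ∑ A ∈ Finset.univ.powerset.filter (fun A => Z ⊆ A ∧ A ⊆ U), ((-1:R) ^ A.card)
        = ∑ S ∈ (U \ Z).powerset, ((-1:R) ^ (S.card + Z.card)) := by
      refine Finset.sum_nbij' (fun A => A \ Z) (fun S => S ∪ Z) ?_ ?_ ?_ ?_ ?_
      · intro A hA
        simp only [Finset.mem_filter, Finset.mem_powerset] at hA ⊢
        exact Finset.sdiff_subset_sdiff hA.2.2 le_rfl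
      · intro S hS
        simp only [Finset.mem_powerset] at hS
        simp only [Finset.mem_filter, Finset.mem_powerset]
        refine ⟨Finset.subset_univ _, Finset.subset_union_right, ?_⟩
        exact Finset.union_subset (hS.trans (Finset.sdiff_subset)) hZU
      · intro A hA
        simp only [Finset.mem_filter, Finset.mem_powerset] at hA
        exact Finset.sdiff_union_of_subset hA.2.1
      · intro S hS
        simp only [Finset.mem_powerset] at hS
        exact Finset.union_sdiff_cancel_right
          (Finset.disjoint_left.mpr fun x hxS hxZ => (Finset.mem_sdiff.mp (hS hxS)).2 hxZ)
      · intro A hA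
        simp only [Finset.mem_filter, Finset.mem_powerset] at hA
        rw [Finset.card_sdiff_of_subset hA.2.1, Nat.sub_add_cancel (Finset.card_le_card hA.2.1)]
    rw [hbij]
    have : ∀ S ∈ (U \ Z).powerset, ((-1:R) ^ (S.card + Z.card))
        = (-1:R) ^ Z.card * (-1:R) ^ S.card := fun S _ => by rw [pow_add]; ring
    rw [Finset.sum_congr rfl this, ← Finset.mul_sum]
    have hcast : (∑ S ∈ (U \ Z).powerset, ((-1:R) ^ S.card))
        = ((∑ S ∈ (U \ Z).powerset, ((-1:ℤ) ^ S.card) : ℤ) : R) := by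
      push_cast; rfl
    rw [hcast, Finset.sum_powerset_neg_one_pow_card]
    by_cases hUZ : U = Z
    · rw [if_pos (by rw [hUZ]; exact Finset.sdiff_self Z), if_pos ⟨hZU, hUZ⟩]
      simp
    · rw [if_neg (fun h => hUZ (Finset.Subset.antisymm
        (fun x hx => by
          by_contra hxZ
          exact absurd (Finset.mem_sdiff.mpr ⟨hx, hxZ⟩) (by rw [h]; simp)) hZU)),
        if_neg (fun h => hUZ h.2)]
      simp
  · rw [if_neg (fun h => hZU h.1)]
    refine Finset.sum_eq_zero fun A hA => ?_
    simp only [Finset.mem_filter, Finset.mem_powerset] at hA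
    exact absurd (hA.2.1.trans hA.2.2) hZU

lemma spart_filter {n : ℕ} {A : Finset (Fin (n + 1))} (hA : Aᶜ.Nonempty) :
    Finset.univ.filter (fun i : Fin (n + 1) => ¬(i ∈ A ∨ ∀ j ∉ A, i ≤ j))
      = Aᶜ.erase (Aᶜ.min' hA) := by
  ext i
  simp only [Finset.mem_filter, Finset.mem_univ, true_and, Finset.mem_erase,
    Finset.mem_compl, not_or, not_forall]
  constructor
  · rintro ⟨hiA, j, hj, hij⟩
    refine ⟨fun he => ?_, hiA⟩
    · subst he
      exact hij (Finset.min'_le _ _ (Finset.mem_compl.mpr hj))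
  · rintro ⟨hne, hiA⟩
    refine ⟨hiA, Aᶜ.min' hA, fun hmA => ?_, fun hle => hne (le_antisymm hle
      (Finset.min'_le _ _ (Finset.mem_compl.mpr hiA)))⟩
    · exact absurd hmA (Finset.mem_compl.mp (Finset.min'_mem _ hA))

lemma spart_even {n : ℕ} {a b : Fin (n + 1) → ℕ} {A : Finset (Fin (n + 1))}
    (hA : Aᶜ.Nonempty) (hev : ∀ i, Even (a i + b i)) :
    (∏ i, (if i ∈ A ∨ (∀ j ∉ A, i ≤ j) then (1:R) else 1 + (-1) ^ (a i + b i)))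
      = 2 ^ (Aᶜ.card - 1) := by
  have h2 : ∀ i : Fin (n + 1), (if i ∈ A ∨ (∀ j ∉ A, i ≤ j) then (1:R)
      else 1 + (-1) ^ (a i + b i)) = if i ∈ A ∨ (∀ j ∉ A, i ≤ j) then (1:R) else 2 := by
    intro i
    by_cases h : i ∈ A ∨ (∀ j ∉ A, i ≤ j)
    · rw [if_pos h, if_pos h]
    · rw [if_neg h, if_neg h, Even.neg_one_pow (hev i)]; norm_num
  rw [Finset.prod_congr rfl fun i _ => h2 i,
    ← Finset.prod_filter_mul_prod_filter_not Finset.univ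
      (fun i : Fin (n + 1) => i ∈ A ∨ ∀ j ∉ A, i ≤ j),
    Finset.prod_congr rfl (fun i hi => if_pos (Finset.mem_filter.mp hi).2),
    Finset.prod_congr rfl (fun i hi => if_neg (Finset.mem_filter.mp hi).2),
    Finset.prod_const_one, one_mul, Finset.prod_const, spart_filter hA,
    Finset.card_erase_of_mem (Finset.min'_mem _ hA)]

lemma compl_nonempty_of_ne_univ {γ : Type*} [Fintype γ] [DecidableEq γ]
    {A : Finset γ} (h : A ≠ Finset.univ) : Aᶜ.Nonempty :=
  Finset.nonempty_iff_ne_empty.mpr fun he => h ((Finset.compl_eq_empty_iff A).mp he)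

lemma sum_Sval (n : ℕ) (a : Fin (n + 1) → ℕ) (t : R) (d : ℕ) (hd : d = ∑ i, a i)
    (hd1 : 1 ≤ d) (b : Fin (n + 1) → ℕ) (hb : ∑ i, b i = d) :
    ∑ A ∈ Finset.univ.powerset.filter
        (fun A => Zset n a ⊆ A ∧ A ⊆ Eset n a ∧ A ≠ Finset.univ),
      Sval n a t A b
    = if b = a then
        (-1) ^ (Zset n a).card * 2 ^ n * ∏ i, (Ffun t (a i)).eval (t ^ b i)
      else 0 := by
  by_cases hpar : ∀ i, Even (a i + b i)
  · -- even case
    set B0 : Finset (Fin (n + 1)) := Finset.univ.filter (fun i => b i = 0) with hB0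
    set T : R := ∏ i, (Ffun t (a i)).eval (t ^ b i) with hT
    have hbne : ∃ i, b i ≠ 0 := by
      by_contra hc
      push_neg at hc
      rw [Finset.sum_congr rfl fun i _ => hc i, Finset.sum_const_zero] at hb
      omega
    have key : ∀ A ∈ Finset.univ.powerset.filter
        (fun A => Zset n a ⊆ A ∧ A ⊆ Eset n a ∧ A ≠ Finset.univ),
        Sval n a t A b = if A ⊆ B0 then (-1) ^ A.card * (2 ^ n * T) else 0 := by
      intro A hA
      rw [Finset.mem_filter, Finset.mem_powerset] at hA
      have hAne : Aᶜ.Nonempty := compl_nonempty_of_ne_univ hA.2.2.2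
      rw [Sval, spart_even hAne hpar]
      by_cases hAB : A ⊆ B0
      · rw [if_pos hAB]
        have hZ0 : (∏ i ∈ A, (0:R) ^ b i) = 1 := by
          rw [Finset.prod_congr rfl fun i hi => ?_, Finset.prod_const_one]
          have : b i = 0 := (Finset.mem_filter.mp (hAB hi)).2
          rw [this, pow_zero]
        have hTT : (∏ i ∈ A, (Ffun t (a i)).eval 1)
            * (∏ i ∈ Aᶜ, (Ffun t (a i)).eval (t ^ b i)) = T := by
          rw [hT, ← Finset.prod_compl_mul_prod A (fun i => (Ffun t (a i)).eval (t ^ b i)),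
            mul_comm]
          congr 1
          refine Finset.prod_congr rfl fun i hi => ?_
          have : b i = 0 := (Finset.mem_filter.mp (hAB hi)).2
          rw [this, pow_zero]
        have hpow : (2:R) ^ A.card * 2 ^ (Aᶜ.card - 1) = 2 ^ n := by
          rw [← pow_add]
          congr 1
          have h1 : Aᶜ.card = n + 1 - A.card := by
            rw [Finset.card_compl, Fintype.card_fin]
          have h2 : 1 ≤ Aᶜ.card := Finset.card_pos.mpr hAne
          have h3 : A.card ≤ n + 1 := Finset.card_le_univ A |>.trans (by simp)
          omega
        calc (-1:R) ^ A.card * 2 ^ A.card * (∏ i ∈ A, (Ffun t (a i)).eval 1)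
              * (∏ i ∈ A, (0:R) ^ b i)
              * (∏ i ∈ Aᶜ, (Ffun t (a i)).eval (t ^ b i)) * 2 ^ (Aᶜ.card - 1)
            = (-1:R) ^ A.card * (2 ^ A.card * 2 ^ (Aᶜ.card - 1))
              * ((∏ i ∈ A, (Ffun t (a i)).eval 1)
                * (∏ i ∈ Aᶜ, (Ffun t (a i)).eval (t ^ b i)))
              * (∏ i ∈ A, (0:R) ^ b i) := by ring
          _ = (-1) ^ A.card * (2 ^ n * T) := by rw [hZ0, hTT, hpow]; ring
      · rw [if_neg hAB]
        obtain ⟨i0, hi0A, hi0B⟩ := Finset.not_subset.mp hAB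
        have : b i0 ≠ 0 := fun h => hi0B (Finset.mem_filter.mpr ⟨Finset.mem_univ _, h⟩)
        rw [Finset.prod_eq_zero (f := fun i => (0:R) ^ b i) hi0A (zero_pow this)]
        ring
    rw [Finset.sum_congr rfl key, Finset.sum_ite, Finset.sum_const_zero, add_zero]
    rw [← Finset.sum_mul]
    have hseteq : (Finset.univ.powerset.filter
        (fun A => Zset n a ⊆ A ∧ A ⊆ Eset n a ∧ A ≠ Finset.univ)).filter (fun A => A ⊆ B0)
        = Finset.univ.powerset.filter
          (fun A => Zset n a ⊆ A ∧ A ⊆ Eset n a ∩ B0) := by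
      ext A
      simp only [Finset.mem_filter, Finset.mem_powerset, Finset.subset_univ, true_and]
      constructor
      · rintro ⟨⟨h1, h2, h3⟩, h4⟩
        exact ⟨h1, Finset.subset_inter h2 h4⟩
      · rintro ⟨h1, h2⟩
        have h2E := h2.trans Finset.inter_subset_left
        have h2B := h2.trans Finset.inter_subset_right
        refine ⟨⟨h1, h2E, fun hu => ?_⟩, h2B⟩
        obtain ⟨i0, hi0⟩ := hbne
        have : i0 ∈ B0 := h2B (hu ▸ Finset.mem_univ i0)
        exact hi0 (Finset.mem_filter.mp this).2
      -- done
    rw [hseteq, alt_sum (Zset n a) (Eset n a ∩ B0)]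
    by_cases hba : b = a
    · subst hba
      have hUZ : Eset n b ∩ B0 = Zset n b := by
        ext i
        simp only [Finset.mem_inter, Eset, Zset, Finset.mem_filter, Finset.mem_univ,
          true_and, hB0]
        constructor
        · rintro ⟨h1, h2⟩; exact h2
        · intro h1; exact ⟨h1 ▸ Even.zero, h1⟩
      rw [if_pos ⟨hUZ ▸ Finset.Subset.refl _, hUZ⟩, if_pos rfl]
      ring
    · rw [if_neg hba]
      by_cases hcond : Zset n a ⊆ Eset n a ∩ B0 ∧ Eset n a ∩ B0 = Zset n a
      · rw [if_pos hcond]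
        have hTzero : T = 0 := by
          have hex : ∃ i, b i < a i := by
            by_contra hc
            push_neg at hc
            have := (Finset.sum_eq_sum_iff_of_le fun i (_ : i ∈ Finset.univ) => hc i).mp
              (by rw [hb, hd])
            exact hba (funext fun i => ((this i (Finset.mem_univ i))).symm)
          obtain ⟨i0, hi0⟩ := hex
          have hpar0 := hpar i0
          rw [Nat.even_add, Nat.even_iff, Nat.even_iff] at hpar0
          have hb0 : b i0 ≠ 0 := by
            intro hb00
            have haeven : Even (a i0) := by rw [Nat.even_iff]; omega
            have : i0 ∈ Zset n a := by
              rw [← hcond.2]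
              exact Finset.mem_inter.mpr ⟨Finset.mem_filter.mpr ⟨Finset.mem_univ _, haeven⟩,
                Finset.mem_filter.mpr ⟨Finset.mem_univ _, hb00⟩⟩
            rw [Zset, Finset.mem_filter] at this
            omega
          have := Ffun_eval_root (t := t) (ai := a i0) (b := b i0)
            (by omega) (by omega) (by omega)
          rw [hT]
          exact Finset.prod_eq_zero (Finset.mem_univ i0) this
        rw [hTzero]
        ring
      · rw [if_neg hcond]
        ring
  · -- odd case
    have hba : b ≠ a := by
      intro h
      subst h
      exact hpar fun i => ⟨b i, by ring⟩
    rw [if_neg hba]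
    refine Finset.sum_eq_zero fun A hA => ?_
    rw [Finset.mem_filter, Finset.mem_powerset] at hA
    have hAne : Aᶜ.Nonempty := compl_nonempty_of_ne_univ hA.2.2.2
    push_neg at hpar
    obtain ⟨i1, hodd1⟩ := hpar
    have hcases : ∃ i2, ¬Even (a i2 + b i2) ∧
        (i2 ∈ A ∨ (i2 ∉ A ∧ i2 ≠ Aᶜ.min' hAne)) := by
      by_cases hi1A : i1 ∈ A
      · exact ⟨i1, hodd1, Or.inl hi1A⟩
      by_cases hm : i1 = Aᶜ.min' hAne
      · -- find another odd index
        have : ¬ ∀ j, j ≠ i1 → Even (a j + b j) := by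
          intro hall
          have hevtot : Even (∑ i, (a i + b i)) := by
            rw [Finset.sum_add_distrib, hb, ← hd]
            exact ⟨d, rfl⟩
          rw [← Finset.add_sum_erase _ _ (Finset.mem_univ i1)] at hevtot
          have : Even (∑ i ∈ Finset.univ.erase i1, (a i + b i)) :=
            Finset.even_sum _ fun j hj => hall j (Finset.mem_erase.mp hj).1
          rw [Nat.even_add] at hevtot
          exact hodd1 (hevtot.mpr this)
        push_neg at this
        obtain ⟨i2, hi2ne, hi2odd⟩ := this
        by_cases hi2A : i2 ∈ A
        · exact ⟨i2, hi2odd, Or.inl hi2A⟩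
        · exact ⟨i2, hi2odd, Or.inr ⟨hi2A, fun h => hi2ne (h.trans hm.symm)⟩⟩
      · exact ⟨i1, hodd1, Or.inr ⟨hi1A, hm⟩⟩
    obtain ⟨i2, hodd2, hcase⟩ := hcases
    rw [Sval]
    rcases hcase with hi2A | ⟨hi2A, hi2m⟩
    · have haev : Even (a i2) := by
        have := hA.2.2.1 hi2A
        rw [Eset, Finset.mem_filter] at this
        exact this.2
      have hbodd : b i2 ≠ 0 := by
        intro h
        exact hodd2 (by rw [h, add_zero]; exact haev)
      rw [Finset.prod_eq_zero (f := fun i => (0:R) ^ b i) hi2A (zero_pow hbodd)]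
      ring
    · have hfac : (if i2 ∈ A ∨ (∀ j ∉ A, i2 ≤ j) then (1:R)
          else 1 + (-1) ^ (a i2 + b i2)) = 0 := by
        rw [if_neg, Odd.neg_one_pow (Nat.not_even_iff_odd.mp hodd2)]
        · ring
        · push_neg
          refine ⟨hi2A, Aᶜ.min' hAne, Finset.mem_compl.mp (Finset.min'_mem _ hAne), ?_⟩
          exact lt_of_le_of_ne (Finset.min'_le _ _ (Finset.mem_compl.mpr hi2A))
            (fun h => hi2m h.symm)
      rw [Finset.prod_eq_zero (Finset.mem_univ i2) hfac]
      ring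

lemma ellForm_univ (n : ℕ) (t : R) (A : Finset (Fin (n + 1))) (k s : Fin (n + 1) → ℕ) :
    ellForm n t A k s = ∑ i, MvPolynomial.C (if i ∈ A then (0:R)
      else (-1) ^ s i * t ^ k i) * MvPolynomial.X i := by
  rw [ellForm,
    ← Finset.sum_compl_add_sum A (fun i => MvPolynomial.C (if i ∈ A then (0:R)
      else (-1) ^ s i * t ^ k i) * MvPolynomial.X i)]
  have h1 : (∑ i ∈ Aᶜ, MvPolynomial.C (if i ∈ A then (0:R) else (-1) ^ s i * t ^ k i)
        * MvPolynomial.X i)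
      = ∑ i ∈ Aᶜ, MvPolynomial.C ((-1 : R) ^ s i * t ^ k i) * MvPolynomial.X i :=
    Finset.sum_congr rfl fun i hi => by rw [if_neg (Finset.mem_compl.mp hi)]
  have h2 : (∑ i ∈ A, MvPolynomial.C (if i ∈ A then (0:R) else (-1) ^ s i * t ^ k i)
        * MvPolynomial.X i) = ∑ _i ∈ A, (0 : MvPolynomial (Fin (n + 1)) R) :=
    Finset.sum_congr rfl fun i hi => by rw [if_pos hi, map_zero, zero_mul]
  rw [h1, h2, Finset.sum_const_zero, add_zero]

lemma ell_pow (n : ℕ) (t : R) (A : Finset (Fin (n + 1))) (k s : Fin (n + 1) → ℕ) (d : ℕ) :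
    ellForm n t A k s ^ d
      = ∑ b ∈ Finset.piAntidiag Finset.univ d,
          MvPolynomial.C ((Nat.multinomial Finset.univ b : R)
            * ∏ i, (if i ∈ A then (0:R) else (-1) ^ s i * t ^ k i) ^ b i)
            * ∏ i, MvPolynomial.X (R := R) i ^ b i := by
  rw [ellForm_univ, Finset.sum_pow_eq_sum_piAntidiag]
  refine Finset.sum_congr rfl fun b _ => ?_
  rw [map_mul, map_natCast (MvPolynomial.C : R →+* MvPolynomial (Fin (n + 1)) R)]
  rw [mul_assoc]
  congr 1
  calc ∏ i, (MvPolynomial.C (if i ∈ A then (0:R) else (-1) ^ s i * t ^ k i)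
        * MvPolynomial.X i) ^ b i
      = ∏ i, (MvPolynomial.C ((if i ∈ A then (0:R) else (-1) ^ s i * t ^ k i) ^ b i)
        * MvPolynomial.X i ^ b i) := by
        refine Finset.prod_congr rfl fun i _ => ?_
        rw [mul_pow, map_pow]
    _ = _ := by
        rw [Finset.prod_mul_distrib, ← map_prod]

lemma inner_poly (n : ℕ) (a : Fin (n + 1) → ℕ) (t : R) (d : ℕ)
    (A : Finset (Fin (n + 1))) :
    ∑ k ∈ Kset n a A, ∑ s ∈ Sbar n A,
      MvPolynomial.C (Ccoef n a t A k s) * ellForm n t A k s ^ d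
    = ∑ b ∈ Finset.piAntidiag Finset.univ d,
        MvPolynomial.C ((Nat.multinomial Finset.univ b : R) * Sval n a t A b)
          * ∏ i, MvPolynomial.X (R := R) i ^ b i := by
  have step1 : ∀ k ∈ Kset n a A, ∀ s ∈ Sbar n A,
      MvPolynomial.C (Ccoef n a t A k s) * ellForm n t A k s ^ d
      = ∑ b ∈ Finset.piAntidiag Finset.univ d,
          MvPolynomial.C ((Nat.multinomial Finset.univ b : R)
            * (Ccoef n a t A k s
              * ∏ i, (if i ∈ A then (0:R) else (-1) ^ s i * t ^ k i) ^ b i))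
            * ∏ i, MvPolynomial.X (R := R) i ^ b i := by
    intro k _ s _
    rw [ell_pow, Finset.mul_sum]
    refine Finset.sum_congr rfl fun b _ => ?_
    rw [← mul_assoc, ← map_mul]
    congr 2
    ring
  rw [Finset.sum_congr rfl fun k hk => Finset.sum_congr rfl fun s hs => step1 k hk s hs]
  rw [Finset.sum_congr rfl fun k (_ : k ∈ Kset n a A) => Finset.sum_comm]
  rw [Finset.sum_comm]
  refine Finset.sum_congr rfl fun b _ => ?_
  rw [Finset.sum_congr rfl fun k (_ : k ∈ Kset n a A) => (Finset.sum_mul _ _ _).symm,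
    ← Finset.sum_mul]
  congr 1
  rw [Finset.sum_congr rfl fun k (_ : k ∈ Kset n a A) =>
      (map_sum (MvPolynomial.C : R →+* MvPolynomial (Fin (n + 1)) R) _ _).symm,
    ← map_sum]
  congr 1
  simp only [← Finset.mul_sum]
  congr 1
  exact inner_sum_eval' n a t A b

lemma Dcoef_eq (n : ℕ) (a : Fin (n + 1) → ℕ) (t : R) :
    Dcoef n a t = (Nat.multinomial Finset.univ a : R)
      * ((-1) ^ (Zset n a).card * 2 ^ n * ∏ i, (Ffun t (a i)).eval (t ^ a i)) := by
  have hZ1 : ∏ i ∈ Zset n a, (Ffun t (a i)).eval (t ^ a i) = 1 :=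
    Finset.prod_eq_one fun i hi => by
      have h0 : a i = 0 := by
        rw [Zset, Finset.mem_filter] at hi
        exact hi.2
      rw [h0, Ffun_of_zero, Polynomial.eval_one]
  have hprod : (∏ i, (Ffun t (a i)).eval (t ^ a i))
      = ∏ i ∈ (Zset n a)ᶜ, (Ffun t (a i)).eval (t ^ a i) := by
    rw [← Finset.prod_compl_mul_prod (Zset n a)
      (fun i => (Ffun t (a i)).eval (t ^ a i)), hZ1, mul_one]
  rw [Dcoef, hprod]
  ring

theorem unreduced_waring (n : ℕ) (a : Fin (n + 1) → ℕ) (d : ℕ)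
    (hd : d = ∑ i, a i) (hd1 : 1 ≤ d) (t : R) :
    MvPolynomial.C (Dcoef n a t) * ∏ i, MvPolynomial.X i ^ a i =
      ∑ A ∈ Finset.univ.powerset.filter
          (fun A => Zset n a ⊆ A ∧ A ⊆ Eset n a ∧ A ≠ Finset.univ),
        ∑ k ∈ Kset n a A, ∑ s ∈ Sbar n A,
          MvPolynomial.C (Ccoef n a t A k s) * ellForm n t A k s ^ d := by
  rw [Finset.sum_congr rfl fun A _ => inner_poly n a t d A, Finset.sum_comm]
  have hmem : a ∈ Finset.piAntidiag Finset.univ d := by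
    rw [Finset.mem_piAntidiag]
    exact ⟨hd.symm, fun i _ => Finset.mem_univ i⟩
  have step : ∀ b ∈ Finset.piAntidiag Finset.univ d,
      (∑ A ∈ Finset.univ.powerset.filter
          (fun A => Zset n a ⊆ A ∧ A ⊆ Eset n a ∧ A ≠ Finset.univ),
        MvPolynomial.C ((Nat.multinomial Finset.univ b : R) * Sval n a t A b)
          * ∏ i, MvPolynomial.X (R := R) i ^ b i)
      = if b = a then MvPolynomial.C (Dcoef n a t)
          * ∏ i, MvPolynomial.X (R := R) i ^ a i else 0 := by
    intro b hb
    rw [Finset.mem_piAntidiag] at hb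
    rw [← Finset.sum_mul, ← map_sum, ← Finset.mul_sum,
      sum_Sval n a t d hd hd1 b hb.1]
    by_cases hba : b = a
    · subst hba
      rw [if_pos rfl, if_pos rfl]
      congr 2
      rw [Dcoef_eq]
    · rw [if_neg hba, if_neg hba, mul_zero, map_zero, zero_mul]
  rw [Finset.sum_congr rfl step, Finset.sum_ite_eq' _ a _, if_pos hmem]

lemma Ccoef_congr (n : ℕ) (a : Fin (n + 1) → ℕ) (t : R) (A : Finset (Fin (n + 1)))
    {k k' : Fin (n + 1) → ℕ} (s : Fin (n + 1) → ℕ) (h : ∀ i ∉ A, k i = k' i) :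
    Ccoef n a t A k s = Ccoef n a t A k' s := by
  rw [Ccoef, Ccoef]
  congr 1
  exact Finset.prod_congr rfl fun i hi => by rw [h i (Finset.mem_compl.mp hi)]

lemma ellForm_congr (n : ℕ) (t : R) (A : Finset (Fin (n + 1)))
    {k k' : Fin (n + 1) → ℕ} (s : Fin (n + 1) → ℕ) (h : ∀ i ∉ A, k i = k' i) :
    ellForm n t A k s = ellForm n t A k' s := by
  rw [ellForm, ellForm]
  exact Finset.sum_congr rfl fun i hi => by rw [h i (Finset.mem_compl.mp hi)]

lemma ellForm_add (n : ℕ) (t : R) (A : Finset (Fin (n + 1)))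
    (k s : Fin (n + 1) → ℕ) (j : ℕ) :
    ellForm n t A (fun i => k i + j) s = MvPolynomial.C (t ^ j) * ellForm n t A k s := by
  rw [ellForm, ellForm, Finset.mul_sum]
  refine Finset.sum_congr rfl fun i _ => ?_
  rw [← mul_assoc, ← map_mul]
  congr 2
  rw [pow_add]
  ring

lemma reduce_A (n : ℕ) (a : Fin (n + 1) → ℕ) (d : ℕ) (t : R)
    (A : Finset (Fin (n + 1))) (hA : A ≠ Finset.univ) (hd : d = ∑ i, a i) :
    ∑ k ∈ Kbar n a A, ∑ s ∈ Sbar n A,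
      MvPolynomial.C (Cbar n a d t A k s) * ellForm n t A k s ^ d
    = ∑ k ∈ Kset n a A, ∑ s ∈ Sbar n A,
      MvPolynomial.C (Ccoef n a t A k s) * ellForm n t A k s ^ d := by
  have hAne : Aᶜ.Nonempty := compl_nonempty_of_ne_univ hA
  have step1 : ∀ k ∈ Kbar n a A, ∀ s ∈ Sbar n A,
      MvPolynomial.C (Cbar n a d t A k s) * ellForm n t A k s ^ d
      = ∑ j ∈ (Finset.range (d + 1)).filter
          (fun j => ∀ i ∉ A, k i + j ≤ (a i - 1) / 2),
          MvPolynomial.C (Ccoef n a t A (fun i => if i ∈ A then 0 else k i + j) s)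
            * ellForm n t A (fun i => if i ∈ A then 0 else k i + j) s ^ d := by
    intro k _ s _
    rw [Cbar, map_sum, Finset.sum_mul]
    refine Finset.sum_congr rfl fun j _ => ?_
    have hc : Ccoef n a t A (fun i => k i + j) s
        = Ccoef n a t A (fun i => if i ∈ A then 0 else k i + j) s :=
      Ccoef_congr n a t A s fun i hi => (if_neg hi).symm
    have he : ellForm n t A (fun i => if i ∈ A then 0 else k i + j) s
        = MvPolynomial.C (t ^ j) * ellForm n t A k s := by
      rw [ellForm_congr n t A s (fun i hi => if_neg hi :
        ∀ i ∉ A, (if i ∈ A then 0 else k i + j) = k i + j), ellForm_add]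
    rw [hc, he, mul_pow, ← map_pow, ← pow_mul, mul_comm j d, ← mul_assoc, ← map_mul,
      mul_comm (Ccoef n a t A (fun i => if i ∈ A then 0 else k i + j) s) (t ^ (d * j))]
  rw [Finset.sum_congr rfl fun k hk => Finset.sum_congr rfl fun s hs => step1 k hk s hs]
  rw [Finset.sum_congr rfl fun k (_ : k ∈ Kbar n a A) => Finset.sum_comm]
  rw [Finset.sum_sigma']
  refine Finset.sum_nbij' (fun p => fun i => if i ∈ A then 0 else p.1 i + p.2)
    (fun k' => ⟨fun i => if i ∈ A then 0 else k' i - Aᶜ.inf' hAne k', Aᶜ.inf' hAne k'⟩)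
    ?_ ?_ ?_ ?_ ?_
  · rintro ⟨k, j⟩ hp
    rw [Finset.mem_sigma] at hp
    obtain ⟨hk, hj⟩ := hp
    rw [Finset.mem_filter] at hj
    rw [mem_Kset]
    dsimp only
    refine ⟨fun i hi => if_pos hi, fun i hi => ?_⟩
    rw [if_neg hi]
    exact hj.2 i hi
  · intro k' hk'
    rw [mem_Kset] at hk'
    obtain ⟨imin, himin, hinf⟩ := Finset.exists_mem_eq_inf' hAne k'
    have himinA : imin ∉ A := Finset.mem_compl.mp himin
    rw [Finset.mem_sigma]
    constructor
    · rw [Kbar, Finset.mem_filter, mem_Kset]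
      dsimp only
      refine ⟨⟨fun i hi => if_pos hi, fun i hi => ?_⟩, ⟨imin, himinA, ?_⟩⟩
      · rw [if_neg hi]
        exact le_trans (Nat.sub_le _ _) (hk'.2 i hi)
      · rw [if_neg himinA, hinf, Nat.sub_self]
    · rw [Finset.mem_filter, Finset.mem_range]
      try dsimp only
      have hle : Aᶜ.inf' hAne k' ≤ (a imin - 1) / 2 := hinf ▸ hk'.2 imin himinA
      have haled : a imin ≤ d := by
        rw [hd]
        exact Finset.single_le_sum (fun i _ => Nat.zero_le (a i)) (Finset.mem_univ imin)
      constructor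
      · omega
      · intro i hi
        try dsimp only
        rw [if_neg hi]
        have h1 : Aᶜ.inf' hAne k' ≤ k' i := Finset.inf'_le _ (Finset.mem_compl.mpr hi)
        have h2 : k' i ≤ (a i - 1) / 2 := hk'.2 i hi
        omega
  · rintro ⟨k, j⟩ hp
    rw [Finset.mem_sigma] at hp
    obtain ⟨hk, hj⟩ := hp
    rw [Kbar, Finset.mem_filter, mem_Kset] at hk
    obtain ⟨⟨hk0, _⟩, i0, hi0A, hi00⟩ := hk
    try dsimp only at hk0
    try dsimp only at hi00
    try dsimp only at hj
    try dsimp only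
    have hinf : Aᶜ.inf' hAne (fun i => if i ∈ A then 0 else k i + j) = j := by
      refine le_antisymm ?_ ?_
      · have h := Finset.inf'_le (f := fun i => if i ∈ A then 0 else k i + j)
          (Finset.mem_compl.mpr hi0A)
        try dsimp only at h
        rwa [if_neg hi0A, hi00, zero_add] at h
      · refine Finset.le_inf' hAne _ fun i hi => ?_
        try dsimp only
        rw [if_neg (Finset.mem_compl.mp hi)]
        omega
    refine Sigma.ext ?_ ?_
    · funext i
      try dsimp only
      by_cases hi : i ∈ A
      · rw [if_pos hi, hk0 i hi]
      · rw [if_neg hi, if_neg hi, hinf]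
        omega
    · simp only [hinf, heq_eq_eq]
  · intro k' hk'
    rw [mem_Kset] at hk'
    funext i
    try dsimp only
    by_cases hi : i ∈ A
    · rw [if_pos hi, (hk'.1 i hi).symm]
    · rw [if_neg hi, if_neg hi]
      have : Aᶜ.inf' hAne k' ≤ k' i := Finset.inf'_le _ (Finset.mem_compl.mpr hi)
      omega
  · rintro ⟨k, j⟩ _
    rfl

/-- **Corollary (reduced Waring-type identity).** For a sequence `a = (a_0,…,a_n)` of
nonnegative integers with `d = |a| ≥ 1`, in `R[X_0,…,X_n]` one has
`D_a · X_0^{a_0} ⋯ X_n^{a_n}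
  = ∑_{Z_a ⊆ A ⊆ E_a, A ≠ {0,…,n}} ∑_{k ∈ K̄_A} ∑_{s ∈ S̄_A} C̄_{A,k,s} (ℓ_{A,k,s})^d`. -/
theorem reduced_waring_identity (n : ℕ) (a : Fin (n + 1) → ℕ) (d : ℕ)
    (hd : d = ∑ i, a i) (hd1 : 1 ≤ d) (t : R) :
    MvPolynomial.C (Dcoef n a t) * ∏ i, MvPolynomial.X i ^ a i =
      ∑ A ∈ Finset.univ.powerset.filter
          (fun A => Zset n a ⊆ A ∧ A ⊆ Eset n a ∧ A ≠ Finset.univ),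
        ∑ k ∈ Kbar n a A, ∑ s ∈ Sbar n A,
          MvPolynomial.C (Cbar n a d t A k s) * ellForm n t A k s ^ d := by
  rw [Finset.sum_congr rfl fun A hA => reduce_A n a d t A
    (by rw [Finset.mem_filter] at hA; exact hA.2.2.2) hd]
  exact unreduced_waring n a d hd hd1 t

end WaringStmt2
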